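/- arXiv:1610.02207 — 3 statements merged into one kernel-verified Lean document; each statement's English description precedes it below -/
import Mathlib

section
/- Let d be a positive integer and let λ = (λ_1, …, λ_d) be a vector with strictly positive entries. Let (T_n) be an arbitrary sequence of real-valued random variables, and let (λ̂_n) be a sequence of random vectors in ℝ^d converging in probability to λ. Define p_n = 1 − H(T_n; λ) and p̂_n = 1 − H(T_n; λ̂_n). Then p̂_n − p_n converges in probability to 0. -/
open MeasureTheory ProbabilityTheory Filter

/-- The product of `d` independent standard normal distributions. -/
noncomputable def stdGaussPi (d : ℕ) : Measure (Fin d → ℝ) :=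
  Measure.pi fun _ => gaussianReal 0 1

/-- `mixCDF d lam q = H(q; λ) = P(∑ j, λ_j Z_j² ≤ q)` for `Z_1, …, Z_d` IID standard normal. -/
noncomputable def mixCDF (d : ℕ) (lam : Fin d → ℝ) (q : ℝ) : ℝ :=
  (stdGaussPi d {z | ∑ j, lam j * z j ^ 2 ≤ q}).toReal

/-!
Write `Q_λ z = ∑ λ_j z_j²`. If `a λ ≤ μ ≤ a⁻¹ λ` componentwise, then
`a Q_λ ≤ Q_μ ≤ a⁻¹ Q_λ`, so `H(q; μ)` lies between `H(a q; λ)` and `H(a⁻¹ q; λ)`.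
The level sets of `Q_λ` are Lebesgue-null (the positive ones lie in frontiers of convex sets),
so `H(·; λ)` is a continuous distribution function; having limits at `±∞`, it satisfies
`H(c q; λ) → H(q; λ)` uniformly in `q` as `c → 1`. Hence `H(·; μ) → H(·; λ)` uniformly as
`μ → λ`, and `|p̂_n - p_n| > ε` forces `‖λ̂_n - λ‖ ≥ δ` for some `δ > 0` independent of `T_n`.
-/

open Set Topology

namespace MeasureTheory.Measure

theorem AbsolutelyContinuous.pi_fin {n : ℕ} {α : Fin n → Type*} [∀ i, MeasurableSpace (α i)]
    {μ ν : ∀ i, Measure (α i)} [∀ i, SigmaFinite (μ i)] [∀ i, SigmaFinite (ν i)]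
    (h : ∀ i, μ i ≪ ν i) : Measure.pi μ ≪ Measure.pi ν := by
  induction n with
  | zero => rw [pi_of_empty μ, pi_of_empty ν]
  | succ n ih =>
    rw [← (measurePreserving_piFinSuccAbove μ 0).symm.map_eq,
      ← (measurePreserving_piFinSuccAbove ν 0).symm.map_eq]
    exact ((h 0).prod (ih fun j => h _)).map (MeasurableEquiv.measurable _)

end MeasureTheory.Measure

theorem ProbabilityTheory.continuous_cdf (μ : Measure ℝ) [IsProbabilityMeasure μ]
    [NullSingletonClass μ] : Continuous (cdf μ) := by
  refine continuous_iff_continuousAt.2 fun x =>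
    continuousAt_iff_continuous_left_right.2 ⟨?_, (cdf μ).right_continuous x⟩
  have hjump : ENNReal.ofReal (cdf μ x - Function.leftLim (cdf μ) x) = 0 := by
    rw [← StieltjesFunction.measure_singleton, measure_cdf, measure_singleton]
  have hle : Function.leftLim (cdf μ) x ≤ cdf μ x := (cdf μ).mono.leftLim_le le_rfl
  rw [← continuousWithinAt_Iio_iff_Iic, (cdf μ).mono.continuousWithinAt_Iio_iff_leftLim_eq]
  linarith [ENNReal.ofReal_eq_zero.1 hjump]

theorem tendstoUniformlyOn_comp_mul_Ici {E : Type*} [PseudoMetricSpace E] {F : ℝ → E} {L : E}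
    (hF : Continuous F) (hL : Tendsto F atTop (𝓝 L)) :
    TendstoUniformlyOn (fun c x => F (c * x)) F (𝓝 1) (Ici 0) := by
  rw [Metric.tendstoUniformlyOn_iff]
  intro ε hε
  obtain ⟨M, hM0, hM⟩ : ∃ M : ℝ, 0 ≤ M ∧ ∀ x, M ≤ x → dist (F x) L < ε / 2 := by
    obtain ⟨M, hM⟩ := eventually_atTop.1 (Metric.tendsto_nhds.1 hL (ε / 2) (half_pos hε))
    exact ⟨max M 0, le_max_right _ _, fun x hx => hM x (le_of_max_le_left hx)⟩
  obtain ⟨η, hη, hUC⟩ := Metric.uniformContinuousOn_iff.1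
    ((isCompact_Icc (a := 0) (b := 4 * M)).uniformContinuousOn_of_continuous hF.continuousOn) ε hε
  refine Metric.eventually_nhds_iff.2 ⟨min (1 / 2) (η / (2 * M + 1)), by positivity, ?_⟩
  intro c hc x (hx : 0 ≤ x)
  rw [Real.dist_eq, lt_min_iff, abs_lt] at hc
  obtain ⟨⟨hc₁, hc₂⟩, hcη⟩ := hc
  rcases le_or_gt (2 * M) x with hxM | hxM
  · calc dist (F x) (F (c * x)) ≤ dist (F x) L + dist (F (c * x)) L := dist_triangle_right _ _ _
      _ < ε / 2 + ε / 2 := add_lt_add (hM x (by linarith)) (hM _ (by nlinarith))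
      _ = ε := add_halves ε
  · refine hUC x ⟨hx, by linarith⟩ (c * x) ⟨by nlinarith, by nlinarith⟩ ?_
    rw [Real.dist_eq, ← one_sub_mul, abs_mul, abs_of_nonneg hx]
    have hcM : |1 - c| * (2 * M + 1) < η := by
      rw [abs_sub_comm, ← lt_div_iff₀ (by positivity)]; exact hcη
    nlinarith [abs_nonneg (1 - c)]

theorem tendstoUniformly_comp_mul {E : Type*} [PseudoMetricSpace E] {F : ℝ → E} {L L' : E}
    (hF : Continuous F) (hbot : Tendsto F atBot (𝓝 L)) (htop : Tendsto F atTop (𝓝 L')) :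
    TendstoUniformly (fun c x => F (c * x)) F (𝓝 1) := by
  have hneg : TendstoUniformlyOn (fun c x => F (c * x)) F (𝓝 1) (Iic 0) := by
    have hflip := tendstoUniformlyOn_comp_mul_Ici (hF.comp continuous_neg)
      (hbot.comp tendsto_neg_atTop_atBot)
    simpa [Function.comp_def] using hflip.comp Neg.neg
  rw [← tendstoUniformlyOn_univ, ← Iic_union_Ici (a := (0 : ℝ))]
  intro u hu
  filter_upwards [hneg u hu, tendstoUniformlyOn_comp_mul_Ici hF htop u hu] with c h₁ h₂ x hx
  exact hx.elim (h₁ x) (h₂ x)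

section SumWeightedSq

variable {ι : Type*} [Fintype ι]

def sumWeightedSq (w z : ι → ℝ) : ℝ := ∑ i, w i * z i ^ 2

theorem continuous_sumWeightedSq (w : ι → ℝ) : Continuous (sumWeightedSq w) := by
  unfold sumWeightedSq; fun_prop

theorem sumWeightedSq_nonneg {w : ι → ℝ} (hw : 0 ≤ w) (z : ι → ℝ) :
    0 ≤ sumWeightedSq w z :=
  Finset.sum_nonneg fun i _ => mul_nonneg (hw i) (sq_nonneg _)

theorem sumWeightedSq_mono {w w' : ι → ℝ} (h : w ≤ w') (z : ι → ℝ) :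
    sumWeightedSq w z ≤ sumWeightedSq w' z :=
  Finset.sum_le_sum fun i _ => mul_le_mul_of_nonneg_right (h i) (sq_nonneg _)

theorem sumWeightedSq_smul_left (c : ℝ) (w z : ι → ℝ) :
    sumWeightedSq (c • w) z = c * sumWeightedSq w z := by
  simp only [sumWeightedSq, Finset.mul_sum, Pi.smul_apply, smul_eq_mul, mul_assoc]

theorem sumWeightedSq_smul_right (w : ι → ℝ) (c : ℝ) (z : ι → ℝ) :
    sumWeightedSq w (c • z) = c ^ 2 * sumWeightedSq w z := by
  simp only [sumWeightedSq, Finset.mul_sum, Pi.smul_apply, smul_eq_mul]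
  exact Finset.sum_congr rfl fun i _ => by ring

theorem eq_zero_of_sumWeightedSq_nonpos {w : ι → ℝ} (hw : ∀ i, 0 < w i) {z : ι → ℝ}
    (h : sumWeightedSq w z ≤ 0) : z = 0 := by
  have hterm := (Finset.sum_eq_zero_iff_of_nonneg fun i _ =>
    mul_nonneg (hw i).le (sq_nonneg (z i))).1
      (le_antisymm h (sumWeightedSq_nonneg (fun i => (hw i).le) z))
  funext i
  simpa [(hw i).ne'] using hterm i (Finset.mem_univ i)

theorem convexOn_sumWeightedSq {w : ι → ℝ} (hw : 0 ≤ w) :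
    ConvexOn ℝ univ (sumWeightedSq w) := by
  refine ⟨convex_univ, fun x _ y _ a b ha hb hab => ?_⟩
  simp only [sumWeightedSq, smul_eq_mul, Finset.mul_sum, ← Finset.sum_add_distrib]
  refine Finset.sum_le_sum fun i _ => ?_
  have hsq := (even_two.convexOn_pow (𝕜 := ℝ)).2 (mem_univ (x i)) (mem_univ (y i)) ha hb hab
  simp only [Pi.add_apply, Pi.smul_apply, smul_eq_mul] at hsq ⊢
  nlinarith [mul_le_mul_of_nonneg_left hsq (hw i)]

theorem sumWeightedSq_eq_subset_frontier {w : ι → ℝ} {q : ℝ} (hq : 0 < q) :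
    {z | sumWeightedSq w z = q} ⊆ frontier {z | sumWeightedSq w z ≤ q} := by
  intro z (hz : sumWeightedSq w z = q)
  refine ⟨subset_closure hz.le, fun hint => ?_⟩
  have hray : Tendsto (fun t : ℝ => t • z) (𝓝[>] 1) (𝓝 z) := by
    have hcont : Continuous fun t : ℝ => t • z := by fun_prop
    simpa using (hcont.tendsto 1).mono_left nhdsWithin_le_nhds
  obtain ⟨t, ht1, ht⟩ :=
    (eventually_mem_nhdsWithin.and (hray.eventually (mem_interior_iff_mem_nhds.1 hint))).exists
  have htz : sumWeightedSq w (t • z) ≤ q := ht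
  rw [sumWeightedSq_smul_right, hz] at htz
  have ht1 : 1 < t := ht1
  nlinarith [mul_pos (mul_pos (sub_pos.2 ht1) (by linarith : (0 : ℝ) < t + 1)) hq]

theorem volume_sumWeightedSq_eq [Nonempty ι] {w : ι → ℝ} (hw : ∀ i, 0 < w i) (q : ℝ) :
    volume {z : ι → ℝ | sumWeightedSq w z = q} = 0 := by
  rcases le_or_gt q 0 with hq | hq
  · refine measure_mono_null (fun z (hz : _ = q) => ?_) (measure_singleton (0 : ι → ℝ))
    exact eq_zero_of_sumWeightedSq_nonpos hw (hz.trans_le hq)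
  · refine measure_mono_null (sumWeightedSq_eq_subset_frontier hq) ?_
    simpa using ((convexOn_sumWeightedSq fun i => (hw i).le).convex_le q).addHaar_frontier volume

end SumWeightedSq

instance (d : ℕ) : IsProbabilityMeasure (stdGaussPi d) := by
  unfold stdGaussPi; infer_instance

theorem stdGaussPi_absolutelyContinuous (d : ℕ) : stdGaussPi d ≪ volume := by
  rw [volume_pi]
  exact Measure.AbsolutelyContinuous.pi_fin fun _ => gaussianReal_absolutelyContinuous 0 one_ne_zero

noncomputable def mixLaw (d : ℕ) (lam : Fin d → ℝ) : Measure ℝ :=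
  (stdGaussPi d).map (sumWeightedSq lam)

instance (d : ℕ) (lam : Fin d → ℝ) : IsProbabilityMeasure (mixLaw d lam) :=
  Measure.isProbabilityMeasure_map (continuous_sumWeightedSq lam).aemeasurable

section MixCDF

variable {d : ℕ} {lam mu : Fin d → ℝ}

theorem mixLaw_singleton (hd : 0 < d) (hlam : ∀ j, 0 < lam j) (q : ℝ) : mixLaw d lam {q} = 0 := by
  have : Nonempty (Fin d) := ⟨⟨0, hd⟩⟩
  rw [mixLaw,
    Measure.map_apply (continuous_sumWeightedSq lam).measurable (measurableSet_singleton q)]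
  exact stdGaussPi_absolutelyContinuous d (volume_sumWeightedSq_eq hlam q)

theorem mixCDF_eq_cdf (d : ℕ) (lam : Fin d → ℝ) : mixCDF d lam = cdf (mixLaw d lam) := by
  funext q
  rw [cdf_eq_real, measureReal_def, mixLaw,
    Measure.map_apply (continuous_sumWeightedSq lam).measurable measurableSet_Iic]
  rfl

theorem continuous_mixCDF (hd : 0 < d) (hlam : ∀ j, 0 < lam j) : Continuous (mixCDF d lam) := by
  have : NullSingletonClass (mixLaw d lam) := ⟨mixLaw_singleton hd hlam⟩
  rw [mixCDF_eq_cdf]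
  exact continuous_cdf _

theorem mixCDF_antitone_weights (h : lam ≤ mu) (q : ℝ) : mixCDF d mu q ≤ mixCDF d lam q :=
  ENNReal.toReal_mono (measure_ne_top _ _) <|
    measure_mono fun z (hz : sumWeightedSq mu z ≤ q) => (sumWeightedSq_mono h z).trans hz

theorem mixCDF_smul {c : ℝ} (hc : 0 < c) (lam : Fin d → ℝ) (q : ℝ) :
    mixCDF d (c • lam) q = mixCDF d lam (c⁻¹ * q) := by
  unfold mixCDF
  congr 2
  ext z
  change sumWeightedSq (c • lam) z ≤ q ↔ sumWeightedSq lam z ≤ c⁻¹ * q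
  rw [sumWeightedSq_smul_left, le_inv_mul_iff₀ hc]

theorem mixCDF_le_of_smul_le {a : ℝ} (ha : 0 < a) (h : a • lam ≤ mu) (q : ℝ) :
    mixCDF d mu q ≤ mixCDF d lam (a⁻¹ * q) :=
  mixCDF_smul ha lam q ▸ mixCDF_antitone_weights h q

theorem le_mixCDF_of_le_inv_smul {a : ℝ} (ha : 0 < a) (h : mu ≤ a⁻¹ • lam) (q : ℝ) :
    mixCDF d lam (a * q) ≤ mixCDF d mu q := by
  simpa [mixCDF_smul (inv_pos.2 ha)] using mixCDF_antitone_weights h q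

theorem tendstoUniformly_mixCDF (hd : 0 < d) (hlam : ∀ j, 0 < lam j) :
    TendstoUniformly (fun mu => mixCDF d mu) (mixCDF d lam) (𝓝 lam) := by
  rw [Metric.tendstoUniformly_iff]
  intro ε hε
  have hscale : ∀ᶠ c in 𝓝 (1 : ℝ), ∀ q, dist (mixCDF d lam q) (mixCDF d lam (c * q)) < ε := by
    refine Metric.tendstoUniformly_iff.1
      (tendstoUniformly_comp_mul (L := 0) (L' := 1) (continuous_mixCDF hd hlam) ?_ ?_) ε hε <;>
    rw [mixCDF_eq_cdf]
    exacts [tendsto_cdf_atBot _, tendsto_cdf_atTop _]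
  obtain ⟨a, ⟨ha, ha_inv⟩, ha0, ha1⟩ : ∃ a : ℝ,
      ((∀ q, dist (mixCDF d lam q) (mixCDF d lam (a * q)) < ε) ∧
        ∀ q, dist (mixCDF d lam q) (mixCDF d lam (a⁻¹ * q)) < ε) ∧ 0 < a ∧ a < 1 := by
    have hinv := (tendsto_inv₀ one_ne_zero).eventually (inv_one (G := ℝ) ▸ hscale)
    exact (((hscale.and hinv).filter_mono nhdsWithin_le_nhds).and
      (Ioo_mem_nhdsLT zero_lt_one)).exists
  have hlow : ∀ j, (a • lam) j < lam j := fun j => mul_lt_of_lt_one_left (hlam j) ha1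
  have hup : ∀ j, lam j < (a⁻¹ • lam) j := fun j =>
    lt_mul_of_one_lt_left (hlam j) ((one_lt_inv₀ ha0).2 ha1)
  filter_upwards [set_pi_mem_nhds finite_univ fun j _ => Ioo_mem_nhds (hlow j) (hup j)]
    with mu hmu q
  have hupper := mixCDF_le_of_smul_le ha0 (fun j => (hmu j trivial).1.le) q
  have hlower := le_mixCDF_of_le_inv_smul ha0 (fun j => (hmu j trivial).2.le) q
  have h₁ := ha q
  have h₂ := ha_inv q
  rw [Real.dist_eq, abs_lt] at h₁ h₂ ⊢
  constructor <;> linarith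

end MixCDF

theorem stmt0_general {Ω : Type*} [MeasurableSpace Ω] (P : Measure Ω)
    (d : ℕ) (hd : 0 < d) (lam : Fin d → ℝ) (hlam : ∀ j, 0 < lam j)
    (T : ℕ → Ω → ℝ)
    (lamHat : ℕ → Ω → Fin d → ℝ)
    (hprob : ∀ ε > 0, Tendsto (fun n => P {ω | ε < ‖lamHat n ω - lam‖}) atTop (nhds 0)) :
    ∀ ε > 0,
      Tendsto
        (fun n => P {ω |
          ε < |(1 - mixCDF d (lamHat n ω) (T n ω)) - (1 - mixCDF d lam (T n ω))|})
        atTop (nhds 0) := by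
  intro ε hε
  obtain ⟨δ, hδ, hclose⟩ := Metric.eventually_nhds_iff.1
    (Metric.tendstoUniformly_iff.1 (tendstoUniformly_mixCDF hd hlam) ε hε)
  refine tendsto_of_tendsto_of_tendsto_of_le_of_le tendsto_const_nhds
    (hprob (δ / 2) (half_pos hδ)) (fun _ => zero_le) fun n => measure_mono fun ω hω => ?_
  by_contra hnear
  have hdist : dist (lamHat n ω) lam < δ := by
    rw [dist_eq_norm]; exact (not_lt.1 hnear).trans_lt (half_lt_self hδ)
  have hsmall := hclose hdist (T n ω)
  replace hω : ε < |mixCDF d lam (T n ω) - mixCDF d (lamHat n ω) (T n ω)| := by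
    rwa [← sub_sub_sub_cancel_left _ _ 1]
  rw [Real.dist_eq] at hsmall
  linarith

theorem stmt0 {Ω : Type*} [MeasurableSpace Ω] (P : Measure Ω) [IsProbabilityMeasure P]
    (d : ℕ) (hd : 0 < d) (lam : Fin d → ℝ) (hlam : ∀ j, 0 < lam j)
    (T : ℕ → Ω → ℝ) (hT : ∀ n, Measurable (T n))
    (lamHat : ℕ → Ω → Fin d → ℝ) (hlamHat : ∀ n, Measurable (lamHat n))
    (hprob : ∀ ε > 0, Tendsto (fun n => P {ω | ε < ‖lamHat n ω - lam‖}) atTop (nhds 0)) :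
    ∀ ε > 0,
      Tendsto
        (fun n => P {ω |
          ε < |(1 - mixCDF d (lamHat n ω) (T n ω)) - (1 - mixCDF d lam (T n ω))|})
        atTop (nhds 0) :=
  stmt0_general P d hd lam hlam T lamHat hprob
end

section
/- Let d be a positive integer and let λ = (λ_1, …, λ_d) be a vector with strictly positive entries. Let (T_n) be an arbitrary sequence of real-valued random variables, and let (λ̂_n) be a sequence of random vectors in ℝ^d converging in probability to λ. Define p_n = 1 − H(T_n; λ) and p̂_n = 1 − H(T_n; λ̂_n). Then p̂_n − p_n = ‖λ̂_n − λ‖ · O_P(1): there exists a sequence of random variables (R_n) that is bounded in probability (i.e., for every ε > 0 there exist M > 0 and N such that P(|R_n| > M) < ε for all n ≥ N) with p̂_n − p_n = ‖λ̂_n − λ‖ R_n for all n. -/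
/-!
Write `Q_λ z = ∑ j, λ_j z_j²`. If `|μ_j - λ_j| ≤ t λ_j` then `(1 - t) Q_λ ≤ Q_μ ≤ (1 + t) Q_λ`,
so the events `Q_μ ≤ q` and `Q_λ ≤ q` differ only on the band `q / (1 + t) < Q_λ ≤ q / (1 - t)`.
A band `a < Q_λ ≤ b` has Gaussian measure at most `d² (b - a) / a`: on it some term `λ_i z_i²` is at
least `Q_λ / d > a / d`, and for fixed other coordinates `λ_i z_i²` then ranges over an interval of
length at most `b - a` above `a / d`, while the standard normal gives `x² ∈ (A, B]` mass at most
`(B - A) / A`. Hence `H(q; ·)` is Lipschitz near `λ`, uniformly in `q`, and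
`R_n = (p̂_n - p_n) / ‖λ̂_n - λ‖` exceeds the Lipschitz constant only where `λ̂_n` is far from `λ`.
-/

open MeasureTheory ProbabilityTheory Filter

open Set Real
open scoped symmDiff

instance inst_s1 (d : ℕ) : IsProbabilityMeasure (stdGaussPi d) := by
  unfold stdGaussPi; infer_instance

lemma exp_neg_half_mul_two_mul_sqrt_sub_le {a b : ℝ} (ha : 0 < a) (hab : a ≤ b) :
    exp (-a / 2) * (2 * (√b - √a)) ≤ (b - a) / a := by
  have hsab : √a ≤ √b := sqrt_le_sqrt hab
  have hdiff : 2 * √a * (√b - √a) ≤ b - a := by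
    nlinarith [sq_sqrt ha.le, sq_sqrt (ha.le.trans hab)]
  have hexp : √a * exp (-a / 2) ≤ 1 := by
    have h1 : √a ≤ a / 2 + 1 := by nlinarith [sq_sqrt ha.le, sq_nonneg (√a - 1)]
    have h2 : a / 2 + 1 ≤ exp (a / 2) := by linarith [add_one_le_exp (a / 2)]
    calc √a * exp (-a / 2) ≤ exp (a / 2) * exp (-a / 2) := by gcongr; linarith
      _ = 1 := by rw [← exp_add, show a / 2 + -a / 2 = 0 by ring, exp_zero]
  rw [le_div_iff₀ ha]
  calc exp (-a / 2) * (2 * (√b - √a)) * a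
      = (√a * exp (-a / 2)) * (2 * √a * (√b - √a)) := by
        linear_combination (-(exp (-a / 2) * (2 * (√b - √a)))) * sq_sqrt ha.le
    _ ≤ 1 * (b - a) := by gcongr
    _ = b - a := one_mul _

lemma gaussianReal_sq_mem_Ioc_le {a b : ℝ} (ha : 0 < a) :
    gaussianReal 0 1 {x | x ^ 2 ∈ Ioc a b} ≤ ENNReal.ofReal ((b - a) / a) := by
  rcases lt_or_ge b a with hba | hab
  · have hempty : {x : ℝ | x ^ 2 ∈ Ioc a b} = ∅ :=
      eq_empty_of_forall_notMem fun x ⟨h1, h2⟩ => by linarith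
    rw [hempty, measure_empty]
    exact zero_le
  set S := {x : ℝ | x ^ 2 ∈ Ioc a b}
  have hpdf : ∀ x ∈ S, gaussianPDF 0 1 x ≤ ENNReal.ofReal (exp (-a / 2)) := by
    intro x hx
    have hax : a < x ^ 2 := hx.1
    have hnorm : (√(2 * π))⁻¹ ≤ 1 :=
      inv_le_one_of_one_le₀ (one_le_sqrt.mpr (by nlinarith [pi_gt_three]))
    rw [gaussianPDF, gaussianPDFReal, NNReal.coe_one, mul_one, mul_one, sub_zero]
    refine ENNReal.ofReal_le_ofReal ?_
    calc (√(2 * π))⁻¹ * exp (-x ^ 2 / 2) ≤ 1 * exp (-a / 2) := by gcongr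
      _ = exp (-a / 2) := one_mul _
  have hvol : volume S ≤ ENNReal.ofReal (2 * (√b - √a)) := by
    have hsub : S ⊆ Ioc (√a) (√b) ∪ Ico (-√b) (-√a) := by
      intro x ⟨hax, hxb⟩
      have h1 : √a < |x| := by rw [← sqrt_sq_eq_abs]; exact sqrt_lt_sqrt ha.le hax
      have h2 : |x| ≤ √b := by rw [← sqrt_sq_eq_abs]; exact sqrt_le_sqrt hxb
      rcases le_or_gt 0 x with hx | hx
      · rw [abs_of_nonneg hx] at h1 h2; exact Or.inl ⟨h1, h2⟩
      · rw [abs_of_neg hx] at h1 h2; exact Or.inr ⟨by linarith, by linarith⟩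
    calc volume S ≤ volume (Ioc (√a) (√b)) + volume (Ico (-√b) (-√a)) :=
          (measure_mono hsub).trans (measure_union_le _ _)
      _ = ENNReal.ofReal (√b - √a) + ENNReal.ofReal (√b - √a) := by
          rw [Real.volume_Ioc, Real.volume_Ico, neg_sub_neg]
      _ = ENNReal.ofReal (2 * (√b - √a)) := by
          have hpos : 0 ≤ √b - √a := sub_nonneg.2 (sqrt_le_sqrt hab)
          rw [← ENNReal.ofReal_add hpos hpos, two_mul]
  calc gaussianReal 0 1 S = ∫⁻ x in S, gaussianPDF 0 1 x := gaussianReal_apply 0 one_ne_zero S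
    _ ≤ ∫⁻ _ in S, ENNReal.ofReal (exp (-a / 2)) := setLIntegral_mono measurable_const hpdf
    _ = ENNReal.ofReal (exp (-a / 2)) * volume S := setLIntegral_const _ _
    _ ≤ ENNReal.ofReal (exp (-a / 2)) * ENNReal.ofReal (2 * (√b - √a)) := by gcongr
    _ = ENNReal.ofReal (exp (-a / 2) * (2 * (√b - √a))) := (ENNReal.ofReal_mul (exp_nonneg _)).symm
    _ ≤ ENNReal.ofReal ((b - a) / a) :=
        ENNReal.ofReal_le_ofReal (exp_neg_half_mul_two_mul_sqrt_sub_le ha hab)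

lemma MeasureTheory.Measure.pi_le_of_forall_insertNth_le {α : Type*} [MeasurableSpace α] {m : ℕ}
    (μ : Fin (m + 1) → Measure α) [∀ i, IsProbabilityMeasure (μ i)] (i : Fin (m + 1))
    {s : Set (Fin (m + 1) → α)} (hs : MeasurableSet s) {C : ENNReal}
    (h : ∀ y : Fin m → α, μ i {x | i.insertNth x y ∈ s} ≤ C) :
    Measure.pi μ s ≤ C := by
  have hmp := (measurePreserving_piFinSuccAbove μ i).symm
  rw [← hmp.measure_preimage hs.nullMeasurableSet,
    Measure.prod_apply_symm (hs.preimage hmp.measurable)]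
  calc _ ≤ ∫⁻ _, C ∂(Measure.pi fun j => μ (i.succAbove j)) := lintegral_mono fun y => h y
    _ = C := by simp

lemma stdGaussPi_weightedSum_mem_Ioc_dominant_le {d : ℕ} {lam : Fin d → ℝ}
    (hlam : ∀ j, 0 < lam j) {a b : ℝ} (ha : 0 < a) (hab : a ≤ b) (i : Fin d) :
    stdGaussPi d {z | ∑ j, lam j * z j ^ 2 ∈ Ioc a b ∧ ∑ j, lam j * z j ^ 2 ≤ d * (lam i * z i ^ 2)}
      ≤ ENNReal.ofReal (d * (b - a) / a) := by
  obtain ⟨m, rfl⟩ := Nat.exists_eq_add_one_of_ne_zero i.pos.ne'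
  refine Measure.pi_le_of_forall_insertNth_le _ i (by measurability) fun y => ?_
  set S := ∑ k, lam (i.succAbove k) * y k ^ 2
  have hsum : ∀ x, ∑ j, lam j * i.insertNth x y j ^ 2 = lam i * x ^ 2 + S := fun x => by
    simp [Fin.sum_univ_succAbove _ i, S]
  have hli := hlam i
  have hd : (0 : ℝ) < (m + 1 : ℕ) := by positivity
  set A := max (a - S) (a / (m + 1 : ℕ))
  have hA : 0 < A := lt_max_of_lt_right (by positivity)
  calc gaussianReal 0 1 {x | i.insertNth x y ∈ {z | ∑ j, lam j * z j ^ 2 ∈ Ioc a b ∧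
          ∑ j, lam j * z j ^ 2 ≤ (m + 1 : ℕ) * (lam i * z i ^ 2)}}
      ≤ gaussianReal 0 1 {x | x ^ 2 ∈ Ioc (A / lam i) ((b - S) / lam i)} := by
        refine measure_mono fun x ⟨⟨h1, h2⟩, h3⟩ => ?_
        simp only [hsum, Fin.insertNth_apply_same] at h1 h2 h3
        refine ⟨(div_lt_iff₀ hli).2 (max_lt (by linarith) ?_), (le_div_iff₀ hli).2 (by linarith)⟩
        rw [div_lt_iff₀ hd]; linarith
    _ ≤ ENNReal.ofReal (((b - S) / lam i - A / lam i) / (A / lam i)) :=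
        gaussianReal_sq_mem_Ioc_le (by positivity)
    _ ≤ ENNReal.ofReal ((m + 1 : ℕ) * (b - a) / a) := by
        refine ENNReal.ofReal_le_ofReal ?_
        rw [← sub_div, div_div_div_cancel_right₀ hli.ne']
        calc (b - S - A) / A ≤ (b - a) / (a / (m + 1 : ℕ)) :=
              div_le_div₀ (by linarith) (by linarith [le_max_left (a - S) (a / (m + 1 : ℕ))])
                (by positivity) (le_max_right _ _)
          _ = (m + 1 : ℕ) * (b - a) / a := by field_simp

lemma measureReal_stdGaussPi_weightedSum_mem_Ioc_le {d : ℕ} {lam : Fin d → ℝ}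
    (hlam : ∀ j, 0 < lam j) {a b : ℝ} (ha : 0 < a) (hab : a ≤ b) :
    (stdGaussPi d).real {z | ∑ j, lam j * z j ^ 2 ∈ Ioc a b} ≤ d ^ 2 * (b - a) / a := by
  have hcover : {z : Fin d → ℝ | ∑ j, lam j * z j ^ 2 ∈ Ioc a b} ⊆ ⋃ i,
      {z | ∑ j, lam j * z j ^ 2 ∈ Ioc a b ∧ ∑ j, lam j * z j ^ 2 ≤ d * (lam i * z i ^ 2)} := by
    intro z hz
    -- the largest term of the sum is at least its average
    obtain ⟨i, -, hi⟩ := Finset.exists_le_of_sum_le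
      (Finset.nonempty_of_sum_ne_zero (ha.trans hz.1).ne')
      (f := fun _ => ∑ j, lam j * z j ^ 2) (g := fun i => d * (lam i * z i ^ 2))
      (by simp [Finset.mul_sum])
    exact mem_iUnion.2 ⟨i, hz, hi⟩
  calc (stdGaussPi d).real {z | ∑ j, lam j * z j ^ 2 ∈ Ioc a b}
      ≤ ∑ _i : Fin d, d * (b - a) / a :=
        (measureReal_mono hcover).trans <| (measureReal_iUnion_fintype_le _).trans <|
          Finset.sum_le_sum fun i _ => ENNReal.toReal_le_of_le_ofReal (by positivity)
            (stdGaussPi_weightedSum_mem_Ioc_dominant_le hlam ha hab i)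
    _ = d ^ 2 * (b - a) / a := by
      simp only [Finset.sum_const, Finset.card_univ, Fintype.card_fin, nsmul_eq_mul]
      ring

lemma abs_mixCDF_sub_le {d : ℕ} {lam mu : Fin d → ℝ} (hlam : ∀ j, 0 < lam j) {t : ℝ}
    (ht0 : 0 ≤ t) (ht1 : t < 1) (hmu : ∀ j, |mu j - lam j| ≤ t * lam j) (q : ℝ) :
    |mixCDF d mu q - mixCDF d lam q| ≤ d ^ 2 * (2 * t / (1 - t)) := by
  set Q : (Fin d → ℝ) → (Fin d → ℝ) → ℝ := fun ν z => ∑ j, ν j * z j ^ 2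
  have hQ : ∀ z, |Q mu z - Q lam z| ≤ t * Q lam z := fun z => by
    simp only [Q, ← Finset.sum_sub_distrib, Finset.mul_sum, ← sub_mul]
    refine (Finset.abs_sum_le_sum_abs _ _).trans (Finset.sum_le_sum fun j _ => ?_)
    rw [abs_mul, abs_of_nonneg (sq_nonneg (z j)), ← mul_assoc]
    exact mul_le_mul_of_nonneg_right (hmu j) (sq_nonneg _)
  have hQ0 : ∀ z, 0 ≤ Q lam z := fun z =>
    Finset.sum_nonneg fun j _ => mul_nonneg (hlam j).le (sq_nonneg _)
  have hmeas : ∀ ν, MeasurableSet {z : Fin d → ℝ | Q ν z ≤ q} := fun ν =>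
    measurableSet_le (by fun_prop) measurable_const
  have hsymm : {z | Q mu z ≤ q} ∆ {z | Q lam z ≤ q} ⊆
      {z | Q lam z ∈ Ioc (q / (1 + t)) (q / (1 - t))} := by
    rintro z (⟨hmu, hlam⟩ | ⟨hlam, hmu⟩) <;>
    · simp only [mem_ofPred_eq, not_le] at hmu hlam
      have := abs_le.1 (hQ z)
      have := hQ0 z
      refine ⟨(div_lt_iff₀ (by linarith)).2 ?_, (le_div_iff₀ (by linarith)).2 ?_⟩ <;> nlinarith
  calc |mixCDF d mu q - mixCDF d lam q|
      ≤ (stdGaussPi d).real {z | Q lam z ∈ Ioc (q / (1 + t)) (q / (1 - t))} :=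
        (abs_measureReal_sub_le_measureReal_symmDiff (hmeas mu).nullMeasurableSet
          (hmeas lam).nullMeasurableSet).trans (measureReal_mono hsymm)
    _ ≤ d ^ 2 * (2 * t / (1 - t)) := by
      rcases le_or_gt q 0 with hq | hq
      · have hempty : Ioc (q / (1 + t)) (q / (1 - t)) = ∅ :=
          Ioc_eq_empty (not_lt.2 (by rw [div_le_div_iff₀ (by linarith) (by linarith)]; nlinarith))
        simp only [hempty, mem_empty_iff_false, ofPred_false, measureReal_empty]
        positivity
      · refine (measureReal_stdGaussPi_weightedSum_mem_Ioc_le hlam (by positivity)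
          (div_le_div_of_nonneg_left hq.le (by linarith) (by linarith))).trans_eq ?_
        have : 1 - t ≠ 0 := by linarith
        have : 1 + t ≠ 0 := by linarith
        field_simp
        ring

lemma exists_abs_mixCDF_sub_le_mul_norm {d : ℕ} {lam : Fin d → ℝ} (hlam : ∀ j, 0 < lam j) :
    ∃ C δ : ℝ, 0 < δ ∧ ∀ mu, ‖mu - lam‖ ≤ δ → ∀ q,
      |mixCDF d mu q - mixCDF d lam q| ≤ C * ‖mu - lam‖ := by
  obtain ⟨c, hc, hcle⟩ : ∃ c > 0, ∀ j, c ≤ lam j := by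
    rcases isEmpty_or_nonempty (Fin d) with h | h
    · exact ⟨1, one_pos, isEmptyElim⟩
    · obtain ⟨j₀, -, hj₀⟩ := Finset.univ.exists_min_image lam Finset.univ_nonempty
      exact ⟨lam j₀, hlam j₀, fun j => hj₀ j (Finset.mem_univ j)⟩
  refine ⟨4 * d ^ 2 / c, c / 2, by positivity, fun mu hmu q => ?_⟩
  set t := ‖mu - lam‖ / c
  have ht0 : 0 ≤ t := by positivity
  have ht : t ≤ 1 / 2 := by rw [div_le_iff₀ hc]; linarith
  have hrel : ∀ j, |mu j - lam j| ≤ t * lam j := fun j =>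
    calc |mu j - lam j| ≤ ‖mu - lam‖ := norm_le_pi_norm (mu - lam) j
      _ = t * c := (div_mul_cancel₀ _ hc.ne').symm
      _ ≤ t * lam j := by gcongr; exact hcle j
  calc |mixCDF d mu q - mixCDF d lam q| ≤ d ^ 2 * (2 * t / (1 - t)) :=
        abs_mixCDF_sub_le hlam ht0 (by linarith) hrel q
    _ ≤ d ^ 2 * (4 * t) := by
        gcongr
        rw [div_le_iff₀ (by linarith)]
        nlinarith
    _ = 4 * d ^ 2 / c * ‖mu - lam‖ := by simp only [t]; ring

def BoundedInProbability {Ω : Type*} [MeasurableSpace Ω] (P : Measure Ω) (R : ℕ → Ω → ℝ) :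
    Prop :=
  ∀ ε > 0, ∃ M > (0 : ℝ), ∃ N : ℕ, ∀ n ≥ N, P {ω | M < |R n ω|} < ENNReal.ofReal ε

lemma exists_boundedInProbability_of_abs_le_mul_norm {Ω E : Type*} [MeasurableSpace Ω]
    [SeminormedAddCommGroup E] (P : Measure Ω) (X : ℕ → Ω → E)
    (hX : ∀ ε > 0, Tendsto (fun n => P {ω | ε < ‖X n ω‖}) atTop (nhds 0))
    (Y : ℕ → Ω → ℝ) {C δ : ℝ} (hδ : 0 < δ)
    (hY : ∀ n ω, ‖X n ω‖ ≤ δ → |Y n ω| ≤ C * ‖X n ω‖) :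
    ∃ R, BoundedInProbability P R ∧ ∀ n ω, Y n ω = ‖X n ω‖ * R n ω := by
  refine ⟨fun n ω => Y n ω / ‖X n ω‖, fun ε hε => ?_, fun n ω => ?_⟩
  · obtain ⟨N, hN⟩ := eventually_atTop.1 <|
      (hX δ hδ).eventually_lt_const (ENNReal.ofReal_pos.2 hε)
    refine ⟨max C 0 + 1, by positivity, N, fun n hn => (measure_mono fun ω
      (hω : max C 0 + 1 < |Y n ω / ‖X n ω‖|) => ?_).trans_lt (hN n hn)⟩
    by_contra hsmall
    have hbound : |Y n ω / ‖X n ω‖| ≤ max C 0 := by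
      rw [abs_div, abs_norm]
      rcases (norm_nonneg (X n ω)).eq_or_lt with h | h
      · rw [← h, div_zero]; exact le_max_right _ _
      · rw [div_le_iff₀ h]
        exact (hY n ω (not_lt.1 hsmall)).trans (by gcongr; exact le_max_left _ _)
    linarith
  · rcases (norm_nonneg (X n ω)).eq_or_lt with h | h
    · have := hY n ω (h ▸ hδ.le)
      rw [← h, mul_zero] at this
      rw [← h, zero_mul]
      exact abs_nonpos_iff.1 this
    · rw [mul_div_cancel₀ _ h.ne']

theorem stmt1_general {Ω : Type*} [MeasurableSpace Ω] (P : Measure Ω)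
    (d : ℕ) (lam : Fin d → ℝ) (hlam : ∀ j, 0 < lam j)
    (T : ℕ → Ω → ℝ)
    (lamHat : ℕ → Ω → Fin d → ℝ)
    (hprob : ∀ ε > 0, Tendsto (fun n => P {ω | ε < ‖lamHat n ω - lam‖}) atTop (nhds 0)) :
    ∃ R : ℕ → Ω → ℝ,
      (∀ ε > 0, ∃ M > (0 : ℝ), ∃ N : ℕ, ∀ n ≥ N,
        P {ω | M < |R n ω|} < ENNReal.ofReal ε) ∧
      (∀ n ω,
        (1 - mixCDF d (lamHat n ω) (T n ω)) - (1 - mixCDF d lam (T n ω)) =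
          ‖lamHat n ω - lam‖ * R n ω) := by
  obtain ⟨C, δ, hδ, hlip⟩ := exists_abs_mixCDF_sub_le_mul_norm hlam
  refine exists_boundedInProbability_of_abs_le_mul_norm P (fun n ω => lamHat n ω - lam) hprob _
    (C := C) hδ fun n ω hn => ?_
  rw [sub_sub_sub_cancel_left, abs_sub_comm]
  exact hlip _ hn _

theorem stmt1 {Ω : Type*} [MeasurableSpace Ω] (P : Measure Ω) [IsProbabilityMeasure P]
    (d : ℕ) (hd : 0 < d) (lam : Fin d → ℝ) (hlam : ∀ j, 0 < lam j)
    (T : ℕ → Ω → ℝ) (hT : ∀ n, Measurable (T n))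
    (lamHat : ℕ → Ω → Fin d → ℝ) (hlamHat : ∀ n, Measurable (lamHat n))
    (hprob : ∀ ε > 0, Tendsto (fun n => P {ω | ε < ‖lamHat n ω - lam‖}) atTop (nhds 0)) :
    ∃ R : ℕ → Ω → ℝ,
      (∀ ε > 0, ∃ M > (0 : ℝ), ∃ N : ℕ, ∀ n ≥ N,
        P {ω | M < |R n ω|} < ENNReal.ofReal ε) ∧
      (∀ n ω,
        (1 - mixCDF d (lamHat n ω) (T n ω)) - (1 - mixCDF d lam (T n ω)) =
          ‖lamHat n ω - lam‖ * R n ω) :=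
  stmt1_general P d lam hlam T lamHat hprob
end

section
/- Let F : ℝ^p × ℝ^p → ℝ be a continuous function with F(s, σ) ≥ 0 for all s, σ and F(s, σ) = 0 if and only if s = σ. Let σ : Θ → ℝ^p be a continuous map on a topological space Θ, let σ° ∈ ℝ^p and θ° ∈ Θ with σ(θ°) ≠ σ°. Let (s_n) be a sequence of ℝ^p-valued random vectors with s_n → σ° in probability and (θ̂_n) a sequence of Θ-valued random elements with θ̂_n → θ° in probability. Then the test statistic T_n = n · F(s_n, σ(θ̂_n)) diverges to infinity in probability, i.e., for every M > 0, P(T_n > M) → 1. -/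
open MeasureTheory ProbabilityTheory Filter Topology Set

/-! Since `s n → σ°` and `θ̂ n → θ°` in probability and `(s, θ) ↦ F s (σ θ)` is continuous, the
statistic `F (s n) (σ (θ̂ n))` converges in probability to `c = F σ° (σ θ°)`, which is positive
because `σ θ° ≠ σ°`. With probability tending to one it then exceeds `c / 2`, and `n * c / 2`
eventually exceeds any bound `M`. -/

section ConvergesInProbability

variable {Ω ι : Type*} [MeasurableSpace Ω] {P : Measure Ω} {l : Filter ι}

/-- Convergence in probability to a point of a topological space, phrased with neighbourhoods
so that no measurability of `X i` is needed. -/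
def ConvergesInProbabilityTo {E : Type*} [TopologicalSpace E] (P : Measure Ω) (l : Filter ι)
    (X : ι → Ω → E) (x : E) : Prop :=
  ∀ U ∈ 𝓝 x, Tendsto (fun i => P {ω | X i ω ∉ U}) l (𝓝 0)

theorem convergesInProbabilityTo_of_norm_sub {E : Type*} [SeminormedAddCommGroup E]
    {X : ι → Ω → E} {x : E}
    (h : ∀ ε > 0, Tendsto (fun i => P {ω | ε < ‖X i ω - x‖}) l (𝓝 0)) :
    ConvergesInProbabilityTo P l X x := by
  intro U hU
  obtain ⟨ε, hε, hball⟩ := Metric.mem_nhds_iff.mp hU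
  refine tendsto_of_tendsto_of_tendsto_of_le_of_le tendsto_const_nhds (h (ε / 2) (half_pos hε))
    (fun _ => zero_le) fun i => measure_mono fun ω hω => ?_
  by_contra hclose
  exact hω (hball (by simpa [dist_eq_norm] using (not_lt.mp hclose).trans_lt (half_lt_self hε)))

namespace ConvergesInProbabilityTo

variable {E F G : Type*} [TopologicalSpace E] [TopologicalSpace F] [TopologicalSpace G]
  {X : ι → Ω → E} {Y : ι → Ω → F} {x : E} {y : F}

theorem comp (hX : ConvergesInProbabilityTo P l X x) {g : E → G} (hg : ContinuousAt g x) :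
    ConvergesInProbabilityTo P l (fun i ω => g (X i ω)) (g x) :=
  fun _ hW => hX _ (hg hW)

theorem prodMk (hX : ConvergesInProbabilityTo P l X x) (hY : ConvergesInProbabilityTo P l Y y) :
    ConvergesInProbabilityTo P l (fun i ω => (X i ω, Y i ω)) (x, y) := by
  intro W hW
  obtain ⟨U, hU, V, hV, hUV⟩ := mem_nhds_prod_iff.mp hW
  have hsub : ∀ i, {ω | (X i ω, Y i ω) ∉ W} ⊆ {ω | X i ω ∉ U} ∪ {ω | Y i ω ∉ V} :=
    fun i ω hω => by_contra fun hnot => hω (hUV (by simpa [not_or] using hnot))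
  refine tendsto_of_tendsto_of_tendsto_of_le_of_le tendsto_const_nhds
    (by simpa using (hX U hU).add (hY V hV)) (fun _ => zero_le)
    fun i => (measure_mono (hsub i)).trans (measure_union_le _ _)

theorem tendsto_measure_lt_mul [IsProbabilityMeasure P] {Z : ι → Ω → ℝ} {c : ℝ}
    (hZ : ConvergesInProbabilityTo P l Z c) (hc : 0 < c) {a : ι → ℝ} (ha : Tendsto a l atTop)
    (M : ℝ) : Tendsto (fun i => P {ω | M < a i * Z i ω}) l (𝓝 1) := by
  have hlarge : ∀ᶠ i in l, 0 ≤ a i ∧ M < a i * (c / 2) :=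
    (ha.eventually_ge_atTop 0).and
      ((tendsto_id.atTop_mul_const (half_pos hc)).comp ha |>.eventually_gt_atTop M)
  have hcompl : Tendsto (fun i => P {ω | M < a i * Z i ω}ᶜ) l (𝓝 0) := by
    refine tendsto_of_tendsto_of_tendsto_of_le_of_le' tendsto_const_nhds
      (hZ _ (Ioi_mem_nhds (half_lt_self hc))) (Eventually.of_forall fun _ => zero_le) ?_
    filter_upwards [hlarge] with i ⟨ha0, hM⟩
    refine measure_mono fun ω hω hZω => hω ?_
    exact hM.trans_le (mul_le_mul_of_nonneg_left (le_of_lt hZω) ha0)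
  have hlower : ∀ i, 1 - P {ω | M < a i * Z i ω}ᶜ ≤ P {ω | M < a i * Z i ω} := fun i =>
    tsub_le_iff_right.mpr (measure_univ (μ := P) ▸ measure_univ_le_add_compl _)
  refine tendsto_of_tendsto_of_tendsto_of_le_of_le ?_ tendsto_const_nhds hlower
    fun _ => prob_le_one
  simpa using ENNReal.Tendsto.sub tendsto_const_nhds hcompl (Or.inl ENNReal.one_ne_top)

end ConvergesInProbabilityTo

end ConvergesInProbability

theorem stmt10 {Ω : Type*} [MeasurableSpace Ω] (P : Measure Ω) [IsProbabilityMeasure P]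
    {p : ℕ} {Θ : Type*} [TopologicalSpace Θ]
    (F : (Fin p → ℝ) → (Fin p → ℝ) → ℝ)
    (hFcont : Continuous fun sσ : (Fin p → ℝ) × (Fin p → ℝ) => F sσ.1 sσ.2)
    (hFnonneg : ∀ s σ, 0 ≤ F s σ)
    (hFzero : ∀ s σ, F s σ = 0 ↔ s = σ)
    (σmap : Θ → (Fin p → ℝ)) (hσcont : Continuous σmap)
    (σ0 : Fin p → ℝ) (θ0 : Θ) (hMis : σmap θ0 ≠ σ0)
    (s : ℕ → Ω → (Fin p → ℝ))
    (hs : ∀ ε > 0, Tendsto (fun n => P {ω | ε < ‖s n ω - σ0‖}) atTop (nhds 0))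
    (θhat : ℕ → Ω → Θ)
    (hθ : ∀ U ∈ nhds θ0, Tendsto (fun n => P {ω | θhat n ω ∉ U}) atTop (nhds 0)) :
    ∀ M > (0 : ℝ),
      Tendsto (fun n : ℕ => P {ω | M < (n : ℝ) * F (s n ω) (σmap (θhat n ω))}) atTop
        (nhds 1) := by
  intro M _
  have hpos : 0 < F σ0 (σmap θ0) :=
    (hFnonneg _ _).lt_of_ne fun h => hMis ((hFzero _ _).mp h.symm).symm
  have hG : Continuous fun q : (Fin p → ℝ) × Θ => F q.1 (σmap q.2) :=
    hFcont.comp (continuous_fst.prodMk (hσcont.comp continuous_snd))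
  have hstat : ConvergesInProbabilityTo P atTop
      (fun n ω => F (s n ω) (σmap (θhat n ω))) (F σ0 (σmap θ0)) :=
    ((convergesInProbabilityTo_of_norm_sub hs).prodMk hθ).comp hG.continuousAt
  exact hstat.tendsto_measure_lt_mul hpos tendsto_natCast_atTop_atTop M
end
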